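/- arXiv:1810.03060 — 4 statements merged into one kernel-verified Lean document; each statement's English description precedes it below -/
import Mathlib

section
/- Let S be a finite nonempty set of natural numbers with maximum element N, and let a(S) = Σ_{i∈S} 2^i and b(S) = Σ_{i∈S} i·2^i. Then the ceiling of the rational number b(S)/a(S) equals N. (Eiffel, Theorem 1: the index of the maximum non-empty bucket of a gradient queue equals ⌈b/a⌉.) -/
/-!
Every bucket index is at most `N`, so `b ≤ N a` termwise. For `(N - 1) a < b`, the top bucket
contributes `2 ^ N` to `b - (N - 1) a` and a lower bucket `i` contributes `-(N - 1 - i) 2 ^ i`;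
even all lower buckets together cost only `∑_{i<N} (N - 1 - i) 2 ^ i = 2 ^ N - N - 1 < 2 ^ N`.
-/

open Finset

theorem sum_range_pred_sub_mul_two_pow (N : ℕ) :
    ∑ i ∈ range N, ((N : ℚ) - 1 - i) * 2 ^ i = 2 ^ N - N - 1 := by
  induction N with
  | zero => simp
  | succ n ih =>
    have hgeom : ∑ i ∈ range n, (2 : ℚ) ^ i = 2 ^ n - 1 := by
      have := geom_sum_mul (2 : ℚ) n
      norm_num at this
      exact this
    calc ∑ i ∈ range (n + 1), (((n + 1 : ℕ) : ℚ) - 1 - i) * 2 ^ i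
        = ∑ i ∈ range n, (((n : ℚ) - 1 - i) * 2 ^ i + 2 ^ i) := by
          rw [sum_range_succ]
          push_cast
          simp only [add_sub_cancel_right, sub_self, zero_mul, add_zero]
          exact sum_congr rfl fun i _ => by ring
      _ = 2 ^ (n + 1) - ((n + 1 : ℕ) : ℚ) - 1 := by
          rw [sum_add_distrib, ih, hgeom]
          push_cast
          ring

theorem sum_pred_sub_mul_two_pow_lt {T : Finset ℕ} {N : ℕ} (hT : T ⊆ range N) :
    ∑ i ∈ T, ((N : ℚ) - 1 - i) * 2 ^ i < 2 ^ N := by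
  have hnonneg : ∀ i ∈ range N, 0 ≤ ((N : ℚ) - 1 - i) * 2 ^ i := fun i hi => by
    have : (i : ℚ) + 1 ≤ N := by exact_mod_cast mem_range.mp hi
    have : (0 : ℚ) ≤ N - 1 - i := by linarith
    positivity
  calc ∑ i ∈ T, ((N : ℚ) - 1 - i) * 2 ^ i
      ≤ ∑ i ∈ range N, ((N : ℚ) - 1 - i) * 2 ^ i :=
        sum_le_sum_of_subset_of_nonneg hT fun i hi _ => hnonneg i hi
    _ = 2 ^ N - N - 1 := sum_range_pred_sub_mul_two_pow N
    _ < 2 ^ N := by linarith [(N.cast_nonneg : (0 : ℚ) ≤ N)]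

theorem pred_mul_sum_two_pow_lt_sum_mul_two_pow {S : Finset ℕ} {N : ℕ} (hN : N ∈ S)
    (hmax : ∀ i ∈ S, i ≤ N) :
    ((N : ℚ) - 1) * ∑ i ∈ S, (2 : ℚ) ^ i < ∑ i ∈ S, (i : ℚ) * 2 ^ i := by
  have hlower : S.erase N ⊆ range N := fun i hi =>
    mem_range.mpr ((hmax i (mem_of_mem_erase hi)).lt_of_ne (ne_of_mem_erase hi))
  have hsplit : ∑ i ∈ S, (i : ℚ) * 2 ^ i - ((N : ℚ) - 1) * ∑ i ∈ S, (2 : ℚ) ^ i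
      = 2 ^ N - ∑ i ∈ S.erase N, ((N : ℚ) - 1 - i) * 2 ^ i := by
    rw [mul_sum, ← sum_sub_distrib, ← add_sum_erase S _ hN, sub_eq_add_neg (2 ^ N : ℚ),
      ← sum_neg_distrib]
    congr 1
    · ring
    · exact sum_congr rfl fun i _ => by ring
  linarith [sum_pred_sub_mul_two_pow_lt hlower]

theorem sum_mul_two_pow_le_mul_sum_two_pow {S : Finset ℕ} {N : ℕ} (hmax : ∀ i ∈ S, i ≤ N) :
    ∑ i ∈ S, (i : ℚ) * 2 ^ i ≤ N * ∑ i ∈ S, (2 : ℚ) ^ i := by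
  rw [mul_sum]
  exact sum_le_sum fun i hi =>
    mul_le_mul_of_nonneg_right (by exact_mod_cast hmax i hi) (by positivity)

/-- Eiffel, Theorem 1: for a finite nonempty set `S ⊆ ℕ` of nonempty-bucket
indices with maximum `N`, letting `a = Σ_{i∈S} 2^i` and `b = Σ_{i∈S} i·2^i`,
the ceiling of the rational `b/a` equals `N`. -/
theorem gradient_queue_ceil_eq_max (S : Finset ℕ) (hS : S.Nonempty) :
    ⌈(∑ i ∈ S, (i : ℚ) * 2 ^ i) / (∑ i ∈ S, (2 : ℚ) ^ i)⌉ = (S.max' hS : ℤ) := by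
  have hmax : ∀ i ∈ S, i ≤ S.max' hS := S.le_max'
  have ha : (0 : ℚ) < ∑ i ∈ S, (2 : ℚ) ^ i := sum_pos (fun i _ => by positivity) hS
  rw [Int.ceil_eq_iff, lt_div_iff₀ ha, div_le_iff₀ ha]
  push_cast
  exact ⟨pred_mul_sum_two_pow_lt_sum_mul_two_pow (S.max'_mem hS) hmax,
    sum_mul_two_pow_le_mul_sum_two_pow hmax⟩
end

section
/- Let S be a finite nonempty set of natural numbers with maximum element N, and let a(S) = Σ_{i∈S} 2^i and b(S) = Σ_{i∈S} i·2^i. Then (N−1)·a(S) < b(S) as integers; equivalently, the critical point b(S)/a(S) is strictly greater than N−1. (Lower bound on the critical point of the gradient queue in the proof of Theorem 1.) -/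
/-!
Write `b − (N − 1)·a = Σ_{i∈S} (i − N + 1)·2^i`. The top index `N` contributes `2^N`, while the
lower indices together subtract at most `Σ_{i<N} (N − 1 − i)·2^i = 2^N − N − 1`.
-/

open Finset

theorem sum_range_sub_one_sub_mul_two_pow (n : ℕ) :
    ∑ i ∈ range n, ((n : ℤ) - 1 - i) * 2 ^ i = 2 ^ n - n - 1 := by
  induction n with
  | zero => simp
  | succ n ih =>
    have shift (i : ℕ) : ((n + 1 : ℕ) - 1 - (i + 1 : ℕ) : ℤ) * 2 ^ (i + 1)
        = 2 * (((n : ℤ) - 1 - i) * 2 ^ i) := by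
      push_cast; ring
    rw [sum_range_succ', sum_congr rfl fun i _ => shift i, ← mul_sum, ih]
    push_cast; ring

theorem sum_sub_one_sub_mul_two_pow_lt {T : Finset ℕ} {n : ℕ} (hT : T ⊆ range n) :
    ∑ i ∈ T, ((n : ℤ) - 1 - i) * 2 ^ i < 2 ^ n := by
  calc ∑ i ∈ T, ((n : ℤ) - 1 - i) * 2 ^ i
      ≤ ∑ i ∈ range n, ((n : ℤ) - 1 - i) * 2 ^ i :=
        sum_le_sum_of_subset_of_nonneg hT fun i hi _ =>
          mul_nonneg (by have := mem_range.mp hi; omega) (by positivity)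
    _ = 2 ^ n - n - 1 := sum_range_sub_one_sub_mul_two_pow n
    _ < 2 ^ n := by omega

/-- Lower bound on the critical point of the gradient queue: with
`a = Σ_{i∈S} 2^i` and `b = Σ_{i∈S} i·2^i` and `N = max S`, one has
`(N−1)·a < b` as integers, i.e. `b/a > N − 1`. -/
theorem gradient_queue_critical_point_lower_bound (S : Finset ℕ) (hS : S.Nonempty) :
    ((S.max' hS : ℤ) - 1) * (∑ i ∈ S, (2 : ℤ) ^ i) < ∑ i ∈ S, (i : ℤ) * 2 ^ i := by
  set N := S.max' hS
  have below : S.erase N ⊆ range N := fun i hi =>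
    mem_range.mpr <| (S.le_max' i (mem_of_mem_erase hi)).lt_of_ne (ne_of_mem_erase hi)
  have excess : ∑ i ∈ S, (i : ℤ) * 2 ^ i - (N - 1) * ∑ i ∈ S, (2 : ℤ) ^ i
      = 2 ^ N - ∑ i ∈ S.erase N, ((N : ℤ) - 1 - i) * 2 ^ i := by
    rw [mul_sum, ← sum_sub_distrib, ← add_sum_erase S _ (S.max'_mem hS), sub_eq_add_neg (2 ^ N),
      ← sum_neg_distrib]
    congr 1
    · ring
    · exact sum_congr rfl fun i _ => by ring
  linarith [sum_sub_one_sub_mul_two_pow_lt below]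
end

section
/- Let N ≥ 1 be a natural number and let S be any subset of {1, …, N} containing N. With a(S) = Σ_{i∈S} 2^i and b(S) = Σ_{i∈S} i·2^i, and with F = {1, …, N} the full set, one has b(S)·a(F) ≥ b(F)·a(S); equivalently, the critical point b(S)/a(S) is minimized, over all occupancy patterns whose maximal nonempty bucket is N, by the all-ones pattern F. (Extremality/ordering claim in the proof of Theorem 1: among all N-bit strings whose N-th bit is 1, the minimum critical point is attained when all buckets are nonempty.) -/
/-! The buckets of `S` other than `N` lie below `N`, and in base `m ≥ 2` the top term `N·m^N`
outweighs all of them: `∑_{i<N} (N-1-i) m^i ≤ m^N`. Hence the `m^i`-weighted mean of `S` is at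
least `N - 1`, while every bucket in the complement `{1,…,N} \ S` is at most `N - 1`; adding the
complement to `S` can therefore only pull the weighted mean down. -/

open Finset

lemma sum_range_succ_sub_mul_pow_le {m : ℕ} (hm : 2 ≤ m) (n : ℕ) :
    ∑ i ∈ range (n + 1), (n - i) * m ^ i ≤ m ^ (n + 1) := by
  induction n with
  | zero => simp
  | succ n ih =>
    have hsplit : ∑ i ∈ range (n + 1), (n + 1 - i) * m ^ i
        = ∑ i ∈ range (n + 1), (n - i) * m ^ i + ∑ i ∈ range (n + 1), m ^ i := by
      rw [← sum_add_distrib]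
      refine sum_congr rfl fun i hi => ?_
      rw [← add_one_mul, Nat.sub_add_comm (Nat.lt_succ_iff.mp (mem_range.mp hi))]
    have hgeom : ∑ i ∈ range (n + 1), m ^ i < m ^ (n + 1) :=
      Nat.geomSum_lt hm fun i hi => mem_range.mp hi
    calc ∑ i ∈ range (n + 1 + 1), (n + 1 - i) * m ^ i
        = ∑ i ∈ range (n + 1), (n + 1 - i) * m ^ i := by simp [sum_range_succ]
      _ ≤ m ^ (n + 1) + m ^ (n + 1) := by rw [hsplit]; omega
      _ ≤ m ^ (n + 1 + 1) := by
          rw [pow_succ _ (n + 1), ← mul_two]; exact Nat.mul_le_mul_left _ hm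

lemma mul_sum_pow_le_sum_mul_pow {m n : ℕ} (hm : 2 ≤ m) {S : Finset ℕ}
    (hS : ∀ i ∈ S, i ≤ n + 1) (hnS : n + 1 ∈ S) :
    n * ∑ i ∈ S, m ^ i ≤ ∑ i ∈ S, i * m ^ i := by
  have hlow : S.erase (n + 1) ⊆ range (n + 1) := fun i hi => by
    have := hS i (mem_of_mem_erase hi)
    have := ne_of_mem_erase hi
    simp only [mem_range]; omega
  have hsplit : n * ∑ i ∈ S.erase (n + 1), m ^ i
      = ∑ i ∈ S.erase (n + 1), i * m ^ i + ∑ i ∈ S.erase (n + 1), (n - i) * m ^ i := by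
    rw [mul_sum, ← sum_add_distrib]
    refine sum_congr rfl fun i hi => ?_
    rw [← add_mul, Nat.add_sub_cancel' (Nat.lt_succ_iff.mp (mem_range.mp (hlow hi)))]
  have htail : ∑ i ∈ S.erase (n + 1), (n - i) * m ^ i ≤ m ^ (n + 1) :=
    (sum_le_sum_of_subset hlow).trans (sum_range_succ_sub_mul_pow_le hm n)
  rw [← insert_erase hnS, sum_insert (notMem_erase _ S), sum_insert (notMem_erase _ S),
    mul_add, hsplit, add_one_mul]
  omega

lemma sum_mul_mul_sum_le_of_forall_le {w : ℕ → ℕ} {S T : Finset ℕ} {c : ℕ}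
    (hT : ∀ j ∈ T, j ≤ c) (hS : c * ∑ i ∈ S, w i ≤ ∑ i ∈ S, i * w i) :
    (∑ j ∈ T, j * w j) * ∑ i ∈ S, w i ≤ (∑ i ∈ S, i * w i) * ∑ j ∈ T, w j := by
  have hbT : ∑ j ∈ T, j * w j ≤ c * ∑ j ∈ T, w j := by
    rw [mul_sum]
    exact sum_le_sum fun j hj => Nat.mul_le_mul_right _ (hT j hj)
  calc (∑ j ∈ T, j * w j) * ∑ i ∈ S, w i
      ≤ (c * ∑ j ∈ T, w j) * ∑ i ∈ S, w i := by gcongr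
    _ = (c * ∑ i ∈ S, w i) * ∑ j ∈ T, w j := by ring
    _ ≤ (∑ i ∈ S, i * w i) * ∑ j ∈ T, w j := by gcongr

theorem gradient_queue_all_ones_minimizes_general (N : ℕ) (S : Finset ℕ)
    (hSsub : S ⊆ Finset.Icc 1 N) (hNS : N ∈ S) :
    (∑ i ∈ Finset.Icc 1 N, i * 2 ^ i) * (∑ i ∈ S, 2 ^ i) ≤
      (∑ i ∈ S, i * 2 ^ i) * (∑ i ∈ Finset.Icc 1 N, 2 ^ i) := by
  obtain ⟨n, rfl⟩ : ∃ n, N = n + 1 := Nat.exists_eq_add_one.mpr (mem_Icc.mp (hSsub hNS)).1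
  have hS : ∀ i ∈ S, i ≤ n + 1 := fun i hi => (mem_Icc.mp (hSsub hi)).2
  have hcompl : ∀ j ∈ Icc 1 (n + 1) \ S, j ≤ n := fun j hj => by
    obtain ⟨hjF, hjS⟩ := mem_sdiff.mp hj
    have := (mem_Icc.mp hjF).2
    have : j ≠ n + 1 := fun h => hjS (h ▸ hNS)
    omega
  rw [← sum_sdiff hSsub (f := fun i => i * 2 ^ i), ← sum_sdiff hSsub (f := fun i => 2 ^ i),
    add_mul, mul_add]
  exact Nat.add_le_add_right (sum_mul_mul_sum_le_of_forall_le hcompl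
    (mul_sum_pow_le_sum_mul_pow le_rfl hS hNS)) _

/-- Extremality claim (proof of Theorem 1): for `N ≥ 1` and any
`S ⊆ {1,…,N}` with `N ∈ S`, letting `F = {1,…,N}`, one has
`b(S)·a(F) ≥ b(F)·a(S)`, i.e. among all patterns whose maximal nonempty
bucket is `N`, the critical point `b/a` is minimized by the all-ones
pattern. -/
theorem gradient_queue_all_ones_minimizes (N : ℕ) (hN : 1 ≤ N) (S : Finset ℕ)
    (hSsub : S ⊆ Finset.Icc 1 N) (hNS : N ∈ S) :
    (∑ i ∈ Finset.Icc 1 N, i * 2 ^ i) * (∑ i ∈ S, 2 ^ i) ≤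
      (∑ i ∈ S, i * 2 ^ i) * (∑ i ∈ Finset.Icc 1 N, 2 ^ i) :=
  gradient_queue_all_ones_minimizes_general N S hSsub hNS
end

section
/- Let α ≥ 1 and m ≥ 1 be natural numbers and let S = {α, 2α, …, mα} be the set of the first m positive multiples of α. With the approximate weight base r = 2^{1/α}, set a = Σ_{i∈S} r^i and b = Σ_{i∈S} i·r^i (real numbers). Then α·(m−1) < b/a ≤ α·m; equivalently, ⌈b/(α·a)⌉ = m, so the critical point identifies the maximal occupied bucket mα to within α. (Appendix B, first case: elements evenly distributed over the queue with frequency 1/α behave as an exact gradient queue with m elements.) -/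
/-!
Since `r ^ (k * α) = 2 ^ k`, reindexing `S` by `k ↦ k * α` turns `a` into `∑_{k=1}^m 2^k = 2^{m+1} - 2`
and `b` into `α · ∑_{k=1}^m k 2^k = α ((m - 1) 2^{m+1} + 2)`. The critical point of the exact gradient
queue, `(∑ k 2^k) / (∑ 2^k)`, lies in `(m - 1, m]` because the top weight `2^m` exceeds all the others
together, and `b / a` is `α` times it.
-/

open Finset

lemma sum_image_mul_rpow_inv_pow {α : ℕ} (hα : α ≠ 0) (s : Finset ℕ) {x : ℝ} (hx : 0 ≤ x)
    (g : ℕ → ℝ) :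
    ∑ i ∈ s.image (· * α), g i * (x ^ (α : ℝ)⁻¹) ^ i = ∑ k ∈ s, g (k * α) * x ^ k := by
  rw [sum_image fun k _ l _ h => Nat.eq_of_mul_eq_mul_right (Nat.pos_of_ne_zero hα) h]
  refine sum_congr rfl fun k _ => ?_
  rw [mul_comm k α, pow_mul, Real.rpow_inv_natCast_pow hx hα]

lemma sum_Icc_two_pow (m : ℕ) : ∑ k ∈ Icc 1 m, (2 : ℝ) ^ k = 2 ^ (m + 1) - 2 := by
  induction m with
  | zero => simp
  | succ n ih =>
    rw [sum_Icc_succ_top (by omega), ih]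
    ring

lemma sum_Icc_mul_two_pow (m : ℕ) :
    ∑ k ∈ Icc 1 m, (k : ℝ) * 2 ^ k = ((m : ℝ) - 1) * 2 ^ (m + 1) + 2 := by
  induction m with
  | zero => simp
  | succ n ih =>
    rw [sum_Icc_succ_top (by omega), ih]
    push_cast
    ring

lemma sum_Icc_mul_two_pow_div_mem_Ioc {m : ℕ} (hm : 1 ≤ m) :
    (∑ k ∈ Icc 1 m, (k : ℝ) * 2 ^ k) / ∑ k ∈ Icc 1 m, (2 : ℝ) ^ k ∈ Set.Ioc ((m : ℝ) - 1) m := by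
  rw [sum_Icc_two_pow, sum_Icc_mul_two_pow]
  have hm' : (1 : ℝ) ≤ m := by exact_mod_cast hm
  have h_pow : (m : ℝ) + 1 ≤ 2 ^ m := by exact_mod_cast Nat.lt_two_pow_self (n := m)
  have h_pos : (0 : ℝ) < 2 ^ (m + 1) - 2 := by rw [pow_succ]; linarith
  constructor
  · rw [lt_div_iff₀ h_pos]
    linarith
  · rw [div_le_iff₀ h_pos, pow_succ]
    nlinarith

/-- Appendix B, first case: elements evenly spaced with frequency `1/α`.
For `α, m ≥ 1`, `S = {α, 2α, …, mα}`, and weight base `r = 2^{1/α}`, with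
`a = Σ_{i∈S} r^i` and `b = Σ_{i∈S} i·r^i`, one has
`α·(m−1) < b/a ≤ α·m`, i.e. `⌈b/(α·a)⌉ = m`: the approximate queue behaves
as an exact gradient queue with `m` elements. -/
theorem approx_gradient_queue_even_spacing (α m : ℕ) (hα : 1 ≤ α) (hm : 1 ≤ m) :
    let r : ℝ := (2 : ℝ) ^ ((α : ℝ)⁻¹)
    let S : Finset ℕ := (Finset.Icc 1 m).image (fun k => k * α)
    let a : ℝ := ∑ i ∈ S, r ^ i
    let b : ℝ := ∑ i ∈ S, (i : ℝ) * r ^ i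
    (α : ℝ) * ((m : ℝ) - 1) < b / a ∧ b / a ≤ (α : ℝ) * m ∧
      ⌈b / ((α : ℝ) * a)⌉ = (m : ℤ) := by
  intro r S a b
  have hα₀ : α ≠ 0 := by omega
  have hα_pos : (0 : ℝ) < α := by positivity
  have ha : a = ∑ k ∈ Icc 1 m, (2 : ℝ) ^ k := by
    simpa using sum_image_mul_rpow_inv_pow hα₀ (Icc 1 m) zero_le_two fun _ => 1
  have hb : b = α * ∑ k ∈ Icc 1 m, (k : ℝ) * 2 ^ k := by
    rw [mul_sum]
    simpa [mul_comm (α : ℝ), mul_assoc] using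
      sum_image_mul_rpow_inv_pow hα₀ (Icc 1 m) zero_le_two fun i => (i : ℝ)
  obtain ⟨h_lower, h_upper⟩ := sum_Icc_mul_two_pow_div_mem_Ioc hm
  have h_crit : b / a = α * ((∑ k ∈ Icc 1 m, (k : ℝ) * 2 ^ k) / ∑ k ∈ Icc 1 m, (2 : ℝ) ^ k) := by
    rw [ha, hb, mul_div_assoc]
  refine ⟨?_, ?_, ?_⟩
  · rw [h_crit]; exact mul_lt_mul_of_pos_left h_lower hα_pos
  · rw [h_crit]; exact mul_le_mul_of_nonneg_left h_upper hα_pos.le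
  · rw [div_mul_eq_div_div_swap, h_crit, mul_div_cancel_left₀ _ hα_pos.ne', Int.ceil_eq_iff]
    push_cast
    exact ⟨h_lower, h_upper⟩
end
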